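/- arXiv:2002.06006 — 2 statements merged into one kernel-verified Lean document; each statement's English description precedes it below -/
import Mathlib

section
/- (Symmetry of uMOCP.) Let t₀ < t_e be reals, 𝒰 a set of control functions u : ℝ → (Fin m → ℝ), φ : (Fin n → ℝ) → 𝒰 → ℝ → (Fin n → ℝ) a map (flow) and ψ : (Fin n → ℝ) → (Fin n → ℝ) a map with ψ(φ x u t) = φ (ψ x) u t for all x, u, t ∈ [t₀, t_e]. Let η > 0 and β, δ ∈ ℝ, and for i = 1,…,k let C_i : (Fin n → ℝ) → (Fin m → ℝ) → ℝ and Φ_i : (Fin n → ℝ) → ℝ satisfy C_i (ψ x) v = η * C_i x v + β and Φ_i (ψ x) = η * Φ_i x + δ, and let g_j : (Fin n → ℝ) → (Fin m → ℝ) → ℝ (j = 1,…,l) satisfy g_j (ψ x) v = g_j x v. Define Ĵ_i(x₀, u) = ∫_{t₀}^{t_e} C_i (φ x₀ u t) (u t) dt + Φ_i (φ x₀ u t_e) and assume all the integrands involved are interval-integrable. Let 𝒵 ⊆ (Fin n → ℝ) be the uncertainty set; call u robustly feasible for x₀ if g_j (φ (x₀+α) u t) (u t) ≤ 0 for all j,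 all t ∈ [t₀, t_e] and all α ∈ 𝒵, and put Ĵ_𝒵(x₀, u) = {(Ĵ_1(x₀+α, u), …, Ĵ_k(x₀+α, u)) : α ∈ 𝒵} ⊆ (Fin k → ℝ). Then ū is robustly feasible for x₀ and set-based minmax robust efficient among the controls robustly feasible for x₀ (no such u' ≠ ū has Ĵ_𝒵(x₀, u') ⊆ Ĵ_𝒵(x₀, ū) − K) if and only if ū is robustly feasible and set-based minmax robust efficient for the transformed problem in which x₀ + α is replaced by ψ(x₀ + α) for every α ∈ 𝒵. -/
open MeasureTheory

/-- The nonnegative orthant of `ℝ^k` with the origin removed. -/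
def orthantK (k : ℕ) : Set (Fin k → ℝ) :=
  {z : Fin k → ℝ | ∀ i, 0 ≤ z i} \ {0}

/-- Minkowski difference `B − K` of a set `B ⊆ ℝ^k` with the punctured
nonnegative orthant `K`. -/
def minusK (k : ℕ) (B : Set (Fin k → ℝ)) : Set (Fin k → ℝ) :=
  {x | ∃ b ∈ B, ∃ z ∈ orthantK k, x = b - z}

/-!
Equivariance of the flow turns the `ψ`-transformed trajectory into the `ψ`-image of the
original one. Hence the constraints are unchanged, and every objective vector undergoes the
same map `y ↦ η • y + c` with `c = β (t_e - t₀) + δ`. Since `η > 0`, this map is injective and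
commutes with `B ↦ B − K`, so the two problems have the same feasible controls and the same
dominance relation between their objective sets.
-/

lemma smul_mem_orthantK {k : ℕ} {η : ℝ} (hη : 0 < η) {z : Fin k → ℝ} (hz : z ∈ orthantK k) :
    η • z ∈ orthantK k :=
  ⟨fun i => mul_nonneg hη.le (hz.1 i), fun h0 => hz.2 ((smul_eq_zero.mp h0).resolve_left hη.ne')⟩

lemma minusK_image_smul_add {k : ℕ} {η : ℝ} (hη : 0 < η) (c : Fin k → ℝ)
    (B : Set (Fin k → ℝ)) :
    minusK k ((fun y => η • y + c) '' B) = (fun y => η • y + c) '' minusK k B := by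
  ext x
  constructor
  · rintro ⟨_, ⟨b, hb, rfl⟩, z, hz, rfl⟩
    refine ⟨b - η⁻¹ • z, ⟨b, hb, η⁻¹ • z, smul_mem_orthantK (inv_pos.mpr hη) hz, rfl⟩, ?_⟩
    simp only [smul_sub, smul_inv_smul₀ hη.ne']
    abel
  · rintro ⟨_, ⟨b, hb, z, hz, rfl⟩, rfl⟩
    exact ⟨η • b + c, ⟨b, hb, rfl⟩, η • z, smul_mem_orthantK hη hz, by simp only [smul_sub]; abel⟩

/-- `objSet u` is the set of objective vectors of the control `u` over all realisations of the
uncertainty. -/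
def IsSetMinmaxRobustEfficient {U : Type*} {k : ℕ} (feasible : U → Prop)
    (objSet : U → Set (Fin k → ℝ)) (ū : U) : Prop :=
  feasible ū ∧ ¬ ∃ u', u' ≠ ū ∧ feasible u' ∧ objSet u' ⊆ minusK k (objSet ū)

lemma isSetMinmaxRobustEfficient_congr_image {U : Type*} {k : ℕ}
    {feasible feasible' : U → Prop} {objSet objSet' : U → Set (Fin k → ℝ)}
    {T : (Fin k → ℝ) → (Fin k → ℝ)} (hT : Function.Injective T)
    (hminusK : ∀ B, minusK k (T '' B) = T '' minusK k B)
    (hfeasible : ∀ u, feasible' u ↔ feasible u) (hobjSet : ∀ u, objSet' u = T '' objSet u)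
    (ū : U) :
    IsSetMinmaxRobustEfficient feasible' objSet' ū ↔
      IsSetMinmaxRobustEfficient feasible objSet ū := by
  simp only [IsSetMinmaxRobustEfficient, hfeasible, hobjSet, hminusK,
    Set.image_subset_image_iff hT]

lemma intervalIntegral_eq_mul_add_of_eqOn {f g : ℝ → ℝ} {a b η β : ℝ} (hab : a ≤ b)
    (hf : IntervalIntegrable f volume a b) (hfg : ∀ t ∈ Set.Icc a b, g t = η * f t + β) :
    ∫ t in a..b, g t = η * (∫ t in a..b, f t) + β * (b - a) := by
  rw [intervalIntegral.integral_congr (g := fun t => η * f t + β)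
      (fun t ht => hfg t (Set.uIcc_of_le hab ▸ ht)),
    intervalIntegral.integral_add (hf.const_mul η) intervalIntegrable_const,
    intervalIntegral.integral_const_mul, intervalIntegral.integral_const, smul_eq_mul, mul_comm β]

/-- **Symmetry of uMOCP.**  If the flow `φ` is equivariant under the symmetry `ψ`,
the running costs `C i` and the Mayer terms `Φ i` are invariant under `ψ` up to a
common positive-scale affine transformation (`η > 0`, `β`, `δ`), and the
constraints `g j` are invariant under `ψ`, then a control `ū` is robustly
feasible and set-based minmax robust efficient for the initial conditions
`x₀ + α`, `α ∈ 𝒵`, if and only if it is so for the transformed initial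
conditions `ψ (x₀ + α)`, `α ∈ 𝒵`. -/
theorem symmetry_uMOCP (n m k l : ℕ) (t₀ t_e : ℝ) (ht : t₀ < t_e)
    (𝒰 : Set (ℝ → Fin m → ℝ))
    (φ : (Fin n → ℝ) → 𝒰 → ℝ → (Fin n → ℝ))
    (ψ : (Fin n → ℝ) → (Fin n → ℝ))
    (hequiv : ∀ (x : Fin n → ℝ) (u : 𝒰), ∀ t ∈ Set.Icc t₀ t_e,
      ψ (φ x u t) = φ (ψ x) u t)
    (η β δ : ℝ) (hη : 0 < η)
    (C : Fin k → (Fin n → ℝ) → (Fin m → ℝ) → ℝ)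
    (Φ : Fin k → (Fin n → ℝ) → ℝ)
    (hC : ∀ (i : Fin k) (x : Fin n → ℝ) (v : Fin m → ℝ),
      C i (ψ x) v = η * C i x v + β)
    (hΦ : ∀ (i : Fin k) (x : Fin n → ℝ), Φ i (ψ x) = η * Φ i x + δ)
    (g : Fin l → (Fin n → ℝ) → (Fin m → ℝ) → ℝ)
    (hg : ∀ (j : Fin l) (x : Fin n → ℝ) (v : Fin m → ℝ), g j (ψ x) v = g j x v)
    (Jhat : (Fin n → ℝ) → 𝒰 → Fin k → ℝ)
    (hJhat : ∀ (x : Fin n → ℝ) (u : 𝒰) (i : Fin k),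
      Jhat x u i = (∫ t in t₀..t_e, C i (φ x u t) ((u : ℝ → Fin m → ℝ) t))
        + Φ i (φ x u t_e))
    (hint : ∀ (x : Fin n → ℝ) (u : 𝒰) (i : Fin k),
      IntervalIntegrable (fun t => C i (φ x u t) ((u : ℝ → Fin m → ℝ) t))
        volume t₀ t_e)
    (𝒵 : Set (Fin n → ℝ)) (x₀ : Fin n → ℝ) (ubar : 𝒰) :
    ((∀ (j : Fin l), ∀ α ∈ 𝒵, ∀ t ∈ Set.Icc t₀ t_e,
        g j (φ (x₀ + α) ubar t) ((ubar : ℝ → Fin m → ℝ) t) ≤ 0) ∧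
      ¬ ∃ u' : 𝒰, u' ≠ ubar ∧
        (∀ (j : Fin l), ∀ α ∈ 𝒵, ∀ t ∈ Set.Icc t₀ t_e,
          g j (φ (x₀ + α) u' t) ((u' : ℝ → Fin m → ℝ) t) ≤ 0) ∧
        {y | ∃ α ∈ 𝒵, y = Jhat (x₀ + α) u'} ⊆
          minusK k {y | ∃ α ∈ 𝒵, y = Jhat (x₀ + α) ubar}) ↔
    ((∀ (j : Fin l), ∀ α ∈ 𝒵, ∀ t ∈ Set.Icc t₀ t_e,
        g j (φ (ψ (x₀ + α)) ubar t) ((ubar : ℝ → Fin m → ℝ) t) ≤ 0) ∧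
      ¬ ∃ u' : 𝒰, u' ≠ ubar ∧
        (∀ (j : Fin l), ∀ α ∈ 𝒵, ∀ t ∈ Set.Icc t₀ t_e,
          g j (φ (ψ (x₀ + α)) u' t) ((u' : ℝ → Fin m → ℝ) t) ≤ 0) ∧
        {y | ∃ α ∈ 𝒵, y = Jhat (ψ (x₀ + α)) u'} ⊆
          minusK k {y | ∃ α ∈ 𝒵, y = Jhat (ψ (x₀ + α)) ubar}) := by
  set T : (Fin k → ℝ) → (Fin k → ℝ) := fun y => η • y + fun _ => β * (t_e - t₀) + δ
  have hJhat_ψ : ∀ x u, Jhat (ψ x) u = T (Jhat x u) := fun x u => funext fun i => by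
    have hrun := intervalIntegral_eq_mul_add_of_eqOn (g := fun t => C i (φ (ψ x) u t) (u.1 t))
      ht.le (hint x u i) (fun t htI => by rw [← hequiv x u t htI, hC])
    rw [hJhat, hrun, ← hequiv x u t_e ⟨ht.le, le_rfl⟩, hΦ]
    simp only [T, Pi.add_apply, Pi.smul_apply, smul_eq_mul, hJhat]
    ring
  have hfeasible : ∀ (u : 𝒰), (∀ (j : Fin l), ∀ α ∈ 𝒵, ∀ t ∈ Set.Icc t₀ t_e,
      g j (φ (ψ (x₀ + α)) u t) ((u : ℝ → Fin m → ℝ) t) ≤ 0) ↔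
      ∀ (j : Fin l), ∀ α ∈ 𝒵, ∀ t ∈ Set.Icc t₀ t_e,
        g j (φ (x₀ + α) u t) ((u : ℝ → Fin m → ℝ) t) ≤ 0 := fun u =>
    forall_congr' fun j => forall₂_congr fun α _ => forall₂_congr fun t htI => by
      rw [← hequiv _ u t htI, hg]
  have hobjSet : ∀ (u : 𝒰), {y | ∃ α ∈ 𝒵, y = Jhat (ψ (x₀ + α)) u} =
      T '' {y | ∃ α ∈ 𝒵, y = Jhat (x₀ + α) u} := fun u => by
    ext y
    simp [hJhat_ψ, eq_comm]
  have hT : Function.Injective T := fun y y' h =>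
    smul_right_injective _ hη.ne' (add_right_cancel h)
  exact (isSetMinmaxRobustEfficient_congr_image hT (minusK_image_smul_add hη _)
    hfeasible hobjSet ubar).symm
end

section
/- Let X be a type and ≺ a transitive and irreflexive relation on X. Let A₁ = ArchiveUpdate(P₁, ∅), A_{i+1} = ArchiveUpdate(P_{i+1}, A_i) be the archive sequence generated from finite lists P₁, P₂, … of elements of X, and C_l = ⋃_{i=1}^{l} P_i. If x ∈ X is dominated by some element of C_{l₀} (there exists y ∈ C_{l₀} with y ≺ x), then x ∉ A_m for every m ≥ l₀; i.e., once a dominating point has been sampled, the dominated point is permanently excluded from the archive. -/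
/-- One step of the archiver `ArchiveUpdateℛ`: the candidate `p` is added to the
current archive `A` if no `a ∈ A` dominates `p` (`r a p`), and afterwards every
element dominated by `p` is removed. -/
def archiveStep {X : Type*} (r : X → X → Prop) (A : Set X) (p : X) : Set X :=
  {x ∈ A ∪ {y | y = p ∧ ∀ a ∈ A, ¬ r a p} | ¬ r p x}

/-- The archiver `ArchiveUpdateℛ(P, A₀)`: the elements of the finite list `P` are
processed one at a time, starting from the archive `A₀`. -/
def archiveUpdate {X : Type*} (r : X → X → Prop) (P : List X) (A₀ : Set X) : Set X :=
  P.foldl (archiveStep r) A₀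

section Aux

variable {X : Type*} {r : X → X → Prop}

lemma mem_archiveStep {A : Set X} {p x : X} :
    x ∈ archiveStep r A p ↔ (x ∈ A ∨ (x = p ∧ ∀ a ∈ A, ¬ r a p)) ∧ ¬ r p x := by
  simp only [archiveStep, Set.mem_setOf_eq, Set.mem_union]

/-- Antichain property. -/
def NA (r : X → X → Prop) (A : Set X) : Prop := ∀ a ∈ A, ∀ b ∈ A, ¬ r a b

lemma NA_step (hirr : Irreflexive r) {A : Set X} {p : X}
    (h : NA r A) : NA r (archiveStep r A p) := by
  intro a ha b hb
  rw [mem_archiveStep] at ha hb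
  obtain ⟨ha1, ha2⟩ := ha
  obtain ⟨hb1, hb2⟩ := hb
  rcases ha1 with ha1 | ⟨rfl, hap⟩
  · rcases hb1 with hb1 | ⟨rfl, hbp⟩
    · exact h a ha1 b hb1
    · exact hbp a ha1
  · rcases hb1 with hb1 | ⟨rfl, hbp⟩
    · exact hb2
    · exact hirr _

lemma key_step (htrans : Transitive r) (hirr : Irreflexive r) {A : Set X} {x p : X}
    (hNA : NA r A) (h : ∃ a ∈ A, r a x) :
    ∃ a ∈ archiveStep r A p, r a x := by
  obtain ⟨a, haA, hax⟩ := h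
  by_cases hpa : r p a
  · refine ⟨p, ?_, htrans hpa hax⟩
    rw [mem_archiveStep]
    exact ⟨Or.inr ⟨rfl, fun a' ha' hra' => hNA a' ha' a haA (htrans hra' hpa)⟩, hirr p⟩
  · exact ⟨a, mem_archiveStep.2 ⟨Or.inl haA, hpa⟩, hax⟩

lemma estab_step (htrans : Transitive r) (hirr : Irreflexive r) {A : Set X} {x y : X}
    (hyx : r y x) (hNA : NA r A) :
    ∃ a ∈ archiveStep r A y, r a x := by
  by_cases h : ∃ a ∈ A, r a y
  · obtain ⟨a, haA, hay⟩ := h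
    exact ⟨a, mem_archiveStep.2 ⟨Or.inl haA, fun hya => hirr a (htrans hay hya)⟩,
      htrans hay hyx⟩
  · push_neg at h
    exact ⟨y, mem_archiveStep.2 ⟨Or.inr ⟨rfl, h⟩, hirr y⟩, hyx⟩

lemma NA_fold (hirr : Irreflexive r) :
    ∀ (P : List X) (A : Set X), NA r A → NA r (archiveUpdate r P A) := by
  intro P
  induction P with
  | nil => intro A h; exact h
  | cons p rest ih =>
      intro A h
      exact ih (archiveStep r A p) (NA_step hirr h)

lemma key_fold (htrans : Transitive r) (hirr : Irreflexive r) {x : X} :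
    ∀ (P : List X) (A : Set X), NA r A → (∃ a ∈ A, r a x) →
      ∃ a ∈ archiveUpdate r P A, r a x := by
  intro P
  induction P with
  | nil => intro A _ h; exact h
  | cons p rest ih =>
      intro A hNA h
      exact ih (archiveStep r A p) (NA_step hirr hNA) (key_step htrans hirr hNA h)

lemma estab_fold (htrans : Transitive r) (hirr : Irreflexive r) {x y : X} :
    ∀ (P : List X) (A : Set X), NA r A → y ∈ P → r y x →
      ∃ a ∈ archiveUpdate r P A, r a x := by
  intro P
  induction P with
  | nil => intro A _ h; simp at h
  | cons p rest ih =>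
      intro A hNA hy hyx
      rcases List.mem_cons.1 hy with rfl | hy
      · exact key_fold htrans hirr rest _ (NA_step hirr hNA)
          (estab_step htrans hirr hyx hNA)
      · exact ih (archiveStep r A p) (NA_step hirr hNA) hy hyx

end Aux

/-- Permanent exclusion: once some element of the cumulative sample set
`C_{l₀} = ⋃_{i=1}^{l₀} P i` dominates `x`, the point `x` belongs to no archive
`A m` with `m ≥ l₀`. -/
theorem archive_permanent_exclusion {X : Type*} (r : X → X → Prop)
    (htrans : Transitive r) (hirr : Irreflexive r)
    (P : ℕ → List X) (A : ℕ → Set X)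
    (hA1 : A 1 = archiveUpdate r (P 1) (∅ : Set X))
    (hAs : ∀ i, 1 ≤ i → A (i + 1) = archiveUpdate r (P (i + 1)) (A i))
    (l₀ : ℕ) (hl₀ : 1 ≤ l₀) (x : X)
    (hdom : ∃ y, (∃ i, 1 ≤ i ∧ i ≤ l₀ ∧ y ∈ P i) ∧ r y x)
    (m : ℕ) (hm : l₀ ≤ m) :
    x ∉ A m := by
  obtain ⟨y, ⟨i, hi1, hil, hyP⟩, hyx⟩ := hdom
  -- all archives with index ≥ 1 are antichains
  have hNA : ∀ j, 1 ≤ j → NA r (A j) := by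
    intro j hj
    induction j, hj using Nat.le_induction with
    | base =>
        rw [hA1]
        exact NA_fold hirr _ _ (fun a ha => absurd ha (Set.notMem_empty a))
    | succ j hj ih =>
        rw [hAs j hj]
        exact NA_fold hirr _ _ ih
  -- from index i on, the archive contains a dominator of x
  have hkey : ∀ j, i ≤ j → ∃ a ∈ A j, r a x := by
    intro j hj
    induction j, hj using Nat.le_induction with
    | base =>
        rcases Nat.exists_eq_add_of_le hi1 with ⟨k, hk⟩
        rcases Nat.eq_zero_or_pos k with rfl | hkpos
        · simp only [hk]
          rw [show (1 + 0 : ℕ) = 1 from rfl] at hk ⊢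
          rw [hA1]
          exact estab_fold htrans hirr _ _
            (fun a ha => absurd ha (Set.notMem_empty a)) (hk ▸ hyP) hyx
        · have hk1 : i = k + 1 := by omega
          rw [hk1, hAs k hkpos]
          exact estab_fold htrans hirr _ _ (hNA k hkpos) (hk1 ▸ hyP) hyx
    | succ j hj ih =>
        have hj1 : 1 ≤ j := le_trans hi1 hj
        rw [hAs j hj1]
        exact key_fold htrans hirr _ _ (hNA j hj1) ih
  obtain ⟨a, haA, hax⟩ := hkey m (le_trans hil hm)
  intro hxA
  exact hNA m (le_trans hl₀ hm) a haA x hxA hax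
end
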